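/- With ψ defined by ψ(𝒦) = (|𝒦| − 1)·I(X; X_∅) − H(X_(2^𝒦)|X) + Σ_{𝒜⊆𝒦} H(X_𝒜 | X_(2^𝒜−{𝒜})) for jointly distributed finite random variables X and (X_𝒜)_{𝒜⊆{1,…,L}}, ψ is supermodular: for all 𝒮, 𝒯 ⊆ {1,…,L}, ψ(𝒮) + ψ(𝒯) ≤ ψ(𝒮 ∪ 𝒯) + ψ(𝒮 ∩ 𝒯). -/

import Mathlib

open scoped BigOperators

namespace MDC

structure FinProb (Ω : Type*) [Fintype Ω] where
  μ : Ω → ℝ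
  nonneg : ∀ ω, 0 ≤ μ ω
  sum_one : ∑ ω, μ ω = 1

variable {Ω : Type*} [Fintype Ω]

/-- Probability that the random variable `f` takes the value `a`. -/
noncomputable def pr (P : FinProb Ω) {A : Type*} [DecidableEq A] (f : Ω → A) (a : A) : ℝ :=
  ∑ ω, if f ω = a then P.μ ω else 0

/-- Shannon entropy (base 2) of a finite random variable. -/
noncomputable def H (P : FinProb Ω) {A : Type*} [Fintype A] [DecidableEq A] (f : Ω → A) : ℝ :=
  - ∑ a, pr P f a * Real.logb 2 (pr P f a)

/-- Conditional entropy H(f|g). -/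
noncomputable def Hcond (P : FinProb Ω) {A B : Type*} [Fintype A] [DecidableEq A]
    [Fintype B] [DecidableEq B] (f : Ω → A) (g : Ω → B) : ℝ :=
  H P (fun ω => (f ω, g ω)) - H P g

/-- Mutual information I(f;g). -/
noncomputable def MI (P : FinProb Ω) {A B : Type*} [Fintype A] [DecidableEq A]
    [Fintype B] [DecidableEq B] (f : Ω → A) (g : Ω → B) : ℝ :=
  H P f + H P g - H P (fun ω => (f ω, g ω))

/-- Conditional mutual information I(f;g|h). -/
noncomputable def CMI (P : FinProb Ω) {A B C : Type*} [Fintype A] [DecidableEq A]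
    [Fintype B] [DecidableEq B] [Fintype C] [DecidableEq C]
    (f : Ω → A) (g : Ω → B) (h : Ω → C) : ℝ :=
  H P (fun ω => (f ω, h ω)) + H P (fun ω => (g ω, h ω))
    - H P (fun ω => (f ω, g ω, h ω)) - H P h

/-- Independence of two finite random variables. -/
def Indep (P : FinProb Ω) {A B : Type*} [DecidableEq A] [DecidableEq B]
    (f : Ω → A) (g : Ω → B) : Prop :=
  ∀ a b, pr P (fun ω => (f ω, g ω)) (a, b) = pr P f a * pr P g b

/-- Conditional independence of `f` and `g` given `h` (a Markov chain f − h − g). -/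
def CondIndep (P : FinProb Ω) {A B C : Type*} [DecidableEq A] [DecidableEq B] [DecidableEq C]
    (f : Ω → A) (g : Ω → B) (h : Ω → C) : Prop :=
  ∀ a b c, pr P h c * pr P (fun ω => (f ω, g ω, h ω)) (a, b, c) =
    pr P (fun ω => (f ω, h ω)) (a, c) * pr P (fun ω => (g ω, h ω)) (b, c)

/-- Binary entropy function. -/
noncomputable def Hb (p : ℝ) : ℝ := -(p * Real.logb 2 p) - (1 - p) * Real.logb 2 (1 - p)

/-- Expected Hamming distortion between two random variables. -/
noncomputable def Edist (P : FinProb Ω) {A : Type*} [DecidableEq A] (f g : Ω → A) : ℝ :=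
  ∑ ω, P.μ ω * (if f ω = g ω then 0 else 1)

end MDC

open MDC
/-- The tuple X_(ℬ) = {X_𝒜 : 𝒜 ∈ ℬ}. -/
def tup {Ω 𝒳 : Type} {L : ℕ} (XA : Finset (Fin L) → Ω → 𝒳)
    (B : Finset (Finset (Fin L))) : Ω → ({A : Finset (Fin L) // A ∈ B} → 𝒳) :=
  fun ω A => XA A.1 ω

/-- The set function ψ of the VKG region. -/
noncomputable def psi {Ω 𝒳0 𝒳 : Type} {L : ℕ} [Fintype Ω] [Fintype 𝒳0] [DecidableEq 𝒳0]
    [Fintype 𝒳] [DecidableEq 𝒳] (P : FinProb Ω) (Xr : Ω → 𝒳0)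
    (XA : Finset (Fin L) → Ω → 𝒳) (K : Finset (Fin L)) : ℝ :=
  ((K.card : ℝ) - 1) * MI P Xr (XA ∅)
    - Hcond P (tup XA K.powerset) Xr
    + ∑ A ∈ K.powerset, Hcond P (XA A) (tup XA (A.powerset.erase A))

/-! Put `g(ℱ) = H(X_ℱ, X) - ∑_{𝒜 ∈ ℱ} H(X_𝒜 | X_(2^𝒜 - {𝒜}))` for a family `ℱ` of index sets.
Then `ψ(𝒦) = (|𝒦| - 1) I(X; X_∅) + H(X) - g(2^𝒦)`, and `|𝒦|` is modular, so it suffices that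
`g` is submodular along powersets. It is submodular on all families, because the joint entropy is
(Shannon's inequality) and the sum is modular. It does not increase when a set `𝒜` is added
whose strict subsets are already present, since `H(X_𝒜 | X_ℱ) ≤ H(X_𝒜 | X_(2^𝒜 - {𝒜}))`.
Adding the sets of `2^(𝒮 ∪ 𝒯)` to `2^𝒮 ∪ 2^𝒯` by increasing size, and using
`2^𝒮 ∩ 2^𝒯 = 2^(𝒮 ∩ 𝒯)`, gives `g(2^(𝒮 ∪ 𝒯)) + g(2^(𝒮 ∩ 𝒯)) ≤ g(2^𝒮) + g(2^𝒯)`. -/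

namespace MDC

variable {Ω : Type*} [Fintype Ω] (P : FinProb Ω)

lemma pr_nonneg {A : Type*} [DecidableEq A] (f : Ω → A) (a : A) : 0 ≤ pr P f a :=
  Finset.sum_nonneg fun ω _ => by split_ifs <;> simp [P.nonneg ω]

lemma le_pr_self {A : Type*} [DecidableEq A] (f : Ω → A) (ω : Ω) : P.μ ω ≤ pr P f (f ω) :=
  calc P.μ ω = if f ω = f ω then P.μ ω else 0 := (if_pos rfl).symm
    _ ≤ pr P f (f ω) := Finset.single_le_sum (f := fun ω' => if f ω' = f ω then P.μ ω' else 0)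
        (fun ω' _ => by split_ifs <;> simp [P.nonneg ω']) (Finset.mem_univ ω)

lemma sum_pr_mul {A : Type*} [Fintype A] [DecidableEq A] (f : Ω → A) (φ : A → ℝ) :
    ∑ a, pr P f a * φ a = ∑ ω, P.μ ω * φ (f ω) := by
  simp only [pr, Finset.sum_mul, ite_mul, zero_mul]
  rw [Finset.sum_comm]
  simp

lemma sum_pr {A : Type*} [Fintype A] [DecidableEq A] (f : Ω → A) : ∑ a, pr P f a = 1 := by
  simpa [P.sum_one] using sum_pr_mul P f 1

lemma sum_pr_pair {A C : Type*} [Fintype A] [DecidableEq A] [DecidableEq C]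
    (f : Ω → A) (h : Ω → C) (c : C) : ∑ a, pr P (fun ω => (f ω, h ω)) (a, c) = pr P h c := by
  simp only [pr, Prod.mk.injEq, ite_and]
  rw [Finset.sum_comm]
  simp

lemma H_eq_sum {A : Type*} [Fintype A] [DecidableEq A] (f : Ω → A) :
    H P f = -∑ ω, P.μ ω * Real.logb 2 (pr P f (f ω)) := by
  rw [H, sum_pr_mul P f fun a => Real.logb 2 (pr P f a)]

lemma H_le_of_eq_comp {A B : Type*} [Fintype A] [DecidableEq A] [Fintype B] [DecidableEq B]
    {f : Ω → A} {g : Ω → B} (e : A → B) (hg : ∀ ω, g ω = e (f ω)) : H P g ≤ H P f := by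
  rw [H_eq_sum, H_eq_sum, neg_le_neg_iff]
  refine Finset.sum_le_sum fun ω _ => ?_
  rcases (P.nonneg ω).eq_or_lt with hμ | hμ
  · simp [← hμ]
  refine mul_le_mul_of_nonneg_left (Real.logb_le_logb_of_le one_lt_two
    (hμ.trans_le (le_pr_self P f ω)) ?_) hμ.le
  rw [hg]
  refine Finset.sum_le_sum fun ω' _ => ?_
  split_ifs with h₁ h₂ <;> simp_all [P.nonneg ω']

lemma H_eq_of_eq_comp {A B : Type*} [Fintype A] [DecidableEq A] [Fintype B] [DecidableEq B]
    {f : Ω → A} {g : Ω → B} (u : A → B) (v : B → A)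
    (hu : ∀ ω, g ω = u (f ω)) (hv : ∀ ω, f ω = v (g ω)) : H P f = H P g :=
  le_antisymm (H_le_of_eq_comp P v hv) (H_le_of_eq_comp P u hu)

lemma logb_add_logb_sub_sub_le {x y z w : ℝ} (hx : 0 < x) (hy : 0 < y) (hz : 0 < z) (hw : 0 < w) :
    Real.logb 2 x + Real.logb 2 y - Real.logb 2 z - Real.logb 2 w
      ≤ (x * y / (z * w) - 1) / Real.log 2 := by
  have hsplit : Real.logb 2 x + Real.logb 2 y - Real.logb 2 z - Real.logb 2 w
      = Real.logb 2 (x * y / (z * w)) := by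
    rw [Real.logb_div (by positivity) (by positivity), Real.logb_mul hx.ne' hy.ne',
      Real.logb_mul hz.ne' hw.ne']
    ring
  rw [hsplit, Real.logb, div_le_div_iff_of_pos_right (Real.log_pos one_lt_two)]
  exact Real.log_le_sub_one_of_pos (by positivity)

section Submodularity

variable {A B C : Type*} [Fintype A] [DecidableEq A] [Fintype B] [DecidableEq B]
  [Fintype C] [DecidableEq C] (f : Ω → A) (g : Ω → B) (h : Ω → C)

lemma sum_mul_pr_ratio_le_one :
    ∑ ω, P.μ ω * (pr P (fun ω => (f ω, h ω)) (f ω, h ω) * pr P (fun ω => (g ω, h ω)) (g ω, h ω)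
      / (pr P (fun ω => (f ω, g ω, h ω)) (f ω, g ω, h ω) * pr P h (h ω))) ≤ 1 := by
  have hcancel : ∀ p x y : ℝ, 0 ≤ p → 0 ≤ x / y → p * (x / (p * y)) ≤ x / y := by
    intro p x y hp hxy
    rcases hp.eq_or_lt with rfl | hp
    · simpa using hxy
    · rw [← mul_div_assoc, mul_div_mul_left _ _ hp.ne']
  set pfh := pr P (fun ω => (f ω, h ω))
  set pgh := pr P (fun ω => (g ω, h ω))
  set pfgh := pr P (fun ω => (f ω, g ω, h ω))
  set ph := pr P h
  calc ∑ ω, P.μ ω * (pfh (f ω, h ω) * pgh (g ω, h ω) / (pfgh (f ω, g ω, h ω) * ph (h ω)))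
      = ∑ a, ∑ b, ∑ c, pfgh (a, b, c) * (pfh (a, c) * pgh (b, c) / (pfgh (a, b, c) * ph c)) := by
        rw [← sum_pr_mul P (fun ω => (f ω, g ω, h ω))
          fun t => pfh (t.1, t.2.2) * pgh (t.2.1, t.2.2) / (pfgh t * ph t.2.2)]
        simp only [Fintype.sum_prod_type]
        rfl
    _ ≤ ∑ a, ∑ b, ∑ c, pfh (a, c) * pgh (b, c) / ph c :=
        Finset.sum_le_sum fun a _ => Finset.sum_le_sum fun b _ => Finset.sum_le_sum fun c _ =>
          hcancel _ _ _ (pr_nonneg P _ _) (div_nonneg (mul_nonneg (pr_nonneg P _ _)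
            (pr_nonneg P _ _)) (pr_nonneg P _ _))
    _ = ∑ a, ∑ c, pfh (a, c) * (ph c / ph c) := by
        refine Finset.sum_congr rfl fun a _ => ?_
        rw [Finset.sum_comm]
        refine Finset.sum_congr rfl fun c _ => ?_
        simp only [mul_div_assoc]
        rw [← Finset.mul_sum, ← Finset.sum_div, sum_pr_pair]
    _ ≤ ∑ a, ∑ c, pfh (a, c) :=
        Finset.sum_le_sum fun a _ => Finset.sum_le_sum fun c _ =>
          mul_le_of_le_one_right (pr_nonneg P _ _) (div_self_le_one _)
    _ = 1 := by rw [← Fintype.sum_prod_type', sum_pr]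

theorem H_submod :
    H P (fun ω => (f ω, g ω, h ω)) + H P h
      ≤ H P (fun ω => (f ω, h ω)) + H P (fun ω => (g ω, h ω)) := by
  simp only [H_eq_sum]
  -- `log t ≤ t - 1` at the density ratio `t = p(f,h) p(g,h) / (p(f,g,h) p(h))`, of mean `≤ 1`.
  have hpoint : ∀ ω, P.μ ω * (Real.logb 2 (pr P (fun ω => (f ω, h ω)) (f ω, h ω))
      + Real.logb 2 (pr P (fun ω => (g ω, h ω)) (g ω, h ω))
      - Real.logb 2 (pr P (fun ω => (f ω, g ω, h ω)) (f ω, g ω, h ω)) - Real.logb 2 (pr P h (h ω)))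
      ≤ (P.μ ω * (pr P (fun ω => (f ω, h ω)) (f ω, h ω) * pr P (fun ω => (g ω, h ω)) (g ω, h ω)
        / (pr P (fun ω => (f ω, g ω, h ω)) (f ω, g ω, h ω) * pr P h (h ω))) - P.μ ω)
        / Real.log 2 := by
    intro ω
    rcases (P.nonneg ω).eq_or_lt with hμ | hμ
    · simp [← hμ]
    rw [← mul_sub_one, mul_div_assoc]
    refine mul_le_mul_of_nonneg_left ?_ hμ.le
    exact logb_add_logb_sub_sub_le (hμ.trans_le (le_pr_self P _ ω))
      (hμ.trans_le (le_pr_self P _ ω)) (hμ.trans_le (le_pr_self P _ ω))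
      (hμ.trans_le (le_pr_self P _ ω))
  have hsum := (Finset.sum_le_sum fun ω _ => hpoint ω).trans_eq
    (Finset.sum_div Finset.univ _ _).symm
  rw [Finset.sum_sub_distrib, P.sum_one] at hsum
  have hneg := div_nonpos_of_nonpos_of_nonneg
    (sub_nonpos.mpr (sum_mul_pr_ratio_le_one P f g h)) (Real.log_pos one_lt_two).le
  simp only [mul_sub, mul_add, Finset.sum_sub_distrib, Finset.sum_add_distrib] at hsum
  linarith

end Submodularity

section JointEntropy

variable {ι 𝒳 𝒵 : Type*} [DecidableEq ι] [Fintype 𝒳] [DecidableEq 𝒳] [Fintype 𝒵] [DecidableEq 𝒵]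
  (X : ι → Ω → 𝒳) (Z : Ω → 𝒵)

def joint (B : Finset ι) : Ω → (B → 𝒳) := fun ω i => X i ω

noncomputable def jointEntropy (B : Finset ι) : ℝ := H P fun ω => (joint X B ω, Z ω)

lemma jointEntropy_union_add_inter_le (B C : Finset ι) :
    jointEntropy P X Z (B ∪ C) + jointEntropy P X Z (B ∩ C)
      ≤ jointEntropy P X Z B + jointEntropy P X Z C := by
  have hsub := H_submod P (joint X B) (joint X C) fun ω => (joint X (B ∩ C) ω, Z ω)
  have hunion : H P (fun ω => (joint X B ω, joint X C ω, joint X (B ∩ C) ω, Z ω))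
      = jointEntropy P X Z (B ∪ C) := by
    refine H_eq_of_eq_comp P
      (fun q => (fun i => if hi : i.1 ∈ B then q.1 ⟨i.1, hi⟩
          else q.2.1 ⟨i.1, (Finset.mem_union.mp i.2).resolve_left hi⟩, q.2.2.2))
      (fun t => (fun i => t.1 ⟨i.1, Finset.mem_union_left C i.2⟩,
        fun i => t.1 ⟨i.1, Finset.mem_union_right B i.2⟩,
        fun i => t.1 ⟨i.1, Finset.mem_union_left C (Finset.mem_inter.mp i.2).1⟩, t.2))
      (fun ω => ?_) (fun ω => rfl)
    ext i : 2
    · by_cases hi : i.1 ∈ B <;> simp [joint, hi]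
    · rfl
  have hleft : H P (fun ω => (joint X B ω, joint X (B ∩ C) ω, Z ω)) = jointEntropy P X Z B :=
    H_eq_of_eq_comp P (fun q => (q.1, q.2.2))
      (fun t => (t.1, fun i => t.1 ⟨i.1, (Finset.mem_inter.mp i.2).1⟩, t.2))
      (fun ω => rfl) (fun ω => rfl)
  have hright : H P (fun ω => (joint X C ω, joint X (B ∩ C) ω, Z ω)) = jointEntropy P X Z C :=
    H_eq_of_eq_comp P (fun q => (q.1, q.2.2))
      (fun t => (t.1, fun i => t.1 ⟨i.1, (Finset.mem_inter.mp i.2).2⟩, t.2))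
      (fun ω => rfl) (fun ω => rfl)
  rw [hunion, hleft, hright] at hsub
  exact hsub

lemma jointEntropy_insert_le {par B : Finset ι} (i : ι) (hpar : par ⊆ B) :
    jointEntropy P X Z (insert i B) ≤ jointEntropy P X Z B + Hcond P (X i) (joint X par) := by
  have hsub := H_submod P (X i) (fun ω => (joint X B ω, Z ω)) (joint X par)
  have hinsert : H P (fun ω => (X i ω, (joint X B ω, Z ω), joint X par ω))
      = jointEntropy P X Z (insert i B) := by
    refine H_eq_of_eq_comp P
      (fun q => (fun j => if hj : j.1 ∈ B then q.2.1.1 ⟨j.1, hj⟩ else q.1, q.2.1.2))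
      (fun t => (t.1 ⟨i, Finset.mem_insert_self i B⟩,
        (fun j => t.1 ⟨j.1, Finset.mem_insert_of_mem j.2⟩, t.2),
        fun j => t.1 ⟨j.1, Finset.mem_insert_of_mem (hpar j.2)⟩))
      (fun ω => ?_) (fun ω => rfl)
    ext j : 2
    · by_cases hj : j.1 ∈ B
      · simp [joint, hj]
      · simp [joint, (Finset.mem_insert.mp j.2).resolve_right hj]
    · rfl
  have hbase : H P (fun ω => ((joint X B ω, Z ω), joint X par ω)) = jointEntropy P X Z B :=
    H_eq_of_eq_comp P Prod.fst (fun t => (t, fun j => t.1 ⟨j.1, hpar j.2⟩))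
      (fun ω => rfl) (fun ω => rfl)
  rw [hinsert, hbase] at hsub
  unfold Hcond
  linarith

end JointEntropy

section ChainGap

variable {α 𝒳 𝒵 : Type*} [DecidableEq α] [Fintype 𝒳] [DecidableEq 𝒳] [Fintype 𝒵] [DecidableEq 𝒵]
  (X : Finset α → Ω → 𝒳) (Z : Ω → 𝒵)

noncomputable def chainGap (F : Finset (Finset α)) : ℝ :=
  jointEntropy P X Z F - ∑ A ∈ F, Hcond P (X A) (joint X A.ssubsets)

lemma chainGap_union_add_inter_le (F G : Finset (Finset α)) :
    chainGap P X Z (F ∪ G) + chainGap P X Z (F ∩ G) ≤ chainGap P X Z F + chainGap P X Z G := by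
  have hsum := Finset.sum_union_inter (s₁ := F) (s₂ := G)
    (f := fun A => Hcond P (X A) (joint X A.ssubsets))
  have hjoint := jointEntropy_union_add_inter_le P X Z F G
  unfold chainGap
  linarith

lemma chainGap_insert_le {F : Finset (Finset α)} {A : Finset α} (hA : A.ssubsets ⊆ F) :
    chainGap P X Z (insert A F) ≤ chainGap P X Z F := by
  by_cases hAF : A ∈ F
  · rw [Finset.insert_eq_of_mem hAF]
  have hjoint := jointEntropy_insert_le P X Z A hA
  unfold chainGap
  rw [Finset.sum_insert hAF]
  linarith

lemma chainGap_union_le (F D : Finset (Finset α)) (hD : ∀ A ∈ D, A.ssubsets ⊆ F ∪ D) :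
    chainGap P X Z (F ∪ D) ≤ chainGap P X Z F := by
  revert hD
  refine Finset.induction_on_max_value Finset.card D (fun _ => by simp) ?_
  intro A D hAD hmax ih hD
  have hA : A.ssubsets ⊆ F ∪ D := fun B hB => by
    have hB' := hD A (Finset.mem_insert_self A D) hB
    rw [Finset.union_insert, Finset.mem_insert] at hB'
    exact hB'.resolve_left (Finset.mem_ssubsets.mp hB).ne
  have hD' : ∀ A' ∈ D, A'.ssubsets ⊆ F ∪ D := fun A' hA' B hB => by
    have hB' := hD A' (Finset.mem_insert_of_mem hA') hB
    rw [Finset.union_insert, Finset.mem_insert] at hB'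
    refine hB'.resolve_left fun hBA => ?_
    have hlt := Finset.card_lt_card (Finset.mem_ssubsets.mp hB)
    have hle := hmax A' hA'
    rw [hBA] at hlt
    omega
  rw [Finset.union_insert]
  exact (chainGap_insert_le P X Z hA).trans (ih hD')

lemma chainGap_powerset_union_add_inter_le (S T : Finset α) :
    chainGap P X Z (S ∪ T).powerset + chainGap P X Z (S ∩ T).powerset
      ≤ chainGap P X Z S.powerset + chainGap P X Z T.powerset := by
  have hinter : (S ∩ T).powerset = S.powerset ∩ T.powerset := by
    ext A
    simp only [Finset.mem_powerset, Finset.mem_inter, Finset.subset_inter_iff]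
  have hunion : S.powerset ∪ T.powerset ∪ (S ∪ T).powerset = (S ∪ T).powerset :=
    Finset.union_eq_right.mpr <| Finset.union_subset
      (Finset.powerset_mono.mpr Finset.subset_union_left)
      (Finset.powerset_mono.mpr Finset.subset_union_right)
  have hdown : ∀ A ∈ (S ∪ T).powerset, A.ssubsets ⊆ S.powerset ∪ T.powerset ∪ (S ∪ T).powerset :=
    fun A hA B hB => Finset.mem_union_right _ (Finset.mem_powerset.mpr
      ((Finset.mem_ssubsets.mp hB).subset.trans (Finset.mem_powerset.mp hA)))
  have hgrow := chainGap_union_le P X Z _ _ hdown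
  rw [hunion] at hgrow
  rw [hinter]
  linarith [chainGap_union_add_inter_le P X Z S.powerset T.powerset]

end ChainGap

end MDC

open MDC

lemma psi_eq_chainGap {Ω 𝒳0 𝒳 : Type} {L : ℕ} [Fintype Ω] [Fintype 𝒳0] [DecidableEq 𝒳0]
    [Fintype 𝒳] [DecidableEq 𝒳] (P : FinProb Ω) (Xr : Ω → 𝒳0)
    (XA : Finset (Fin L) → Ω → 𝒳) (K : Finset (Fin L)) :
    psi P Xr XA K = ((K.card : ℝ) - 1) * MI P Xr (XA ∅) + H P Xr - chainGap P XA Xr K.powerset := by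
  have hjoint : Hcond P (tup XA K.powerset) Xr = jointEntropy P XA Xr K.powerset - H P Xr := rfl
  have hsum : ∑ A ∈ K.powerset, Hcond P (XA A) (tup XA (A.powerset.erase A))
      = ∑ A ∈ K.powerset, Hcond P (XA A) (joint XA A.ssubsets) := rfl
  rw [psi, chainGap, hjoint, hsum]
  ring

/-- ψ is supermodular. -/
theorem stmt6 {Ω 𝒳0 𝒳 : Type} {L : ℕ} [Fintype Ω] [Fintype 𝒳0] [DecidableEq 𝒳0]
    [Fintype 𝒳] [DecidableEq 𝒳] (P : FinProb Ω) (Xr : Ω → 𝒳0)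
    (XA : Finset (Fin L) → Ω → 𝒳) (S T : Finset (Fin L)) :
    psi P Xr XA S + psi P Xr XA T ≤ psi P Xr XA (S ∪ T) + psi P Xr XA (S ∩ T) := by
  have hcard : ((S ∪ T).card : ℝ) + (S ∩ T).card = S.card + T.card := by
    exact_mod_cast Finset.card_union_add_card_inter S T
  simp only [psi_eq_chainGap]
  linear_combination chainGap_powerset_union_add_inter_le P XA Xr S T
    - MI P Xr (XA ∅) * hcard
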